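/- For the map f(x) = (1/C)·x·e^{-x²} with 0 < C < e^{-1}, the derivative of the second iterate f∘f at the fixed point V* = √(-log C) equals (1 + 2·log C)², which is greater than 1. -/

import Mathlib

theorem stmt_16 (C : ℝ) (hC0 : 0 < C) (hC1 : C < Real.exp (-1))
    (f : ℝ → ℝ) (hf : ∀ x, f x = (1 / C) * x * Real.exp (-x ^ 2))
    (Vstar : ℝ) (hVstar : Vstar = Real.sqrt (-Real.log C)) :
    deriv (f ∘ f) Vstar = (1 + 2 * Real.log C) ^ 2 ∧
      1 < (1 + 2 * Real.log C) ^ 2 := by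
  have hlog : Real.log C < -1 := by
    have := Real.log_lt_log hC0 hC1
    simpa [Real.log_exp] using this
  have hlogpos : 0 < -Real.log C := by linarith
  have hVsq : Vstar ^ 2 = -Real.log C := by
    rw [hVstar, Real.sq_sqrt hlogpos.le]
  have hexp : Real.exp (-Vstar ^ 2) = C := by
    rw [hVsq, neg_neg, Real.exp_log hC0]
  have hfix : f Vstar = Vstar := by
    rw [hf, hexp]
    field_simp
  have hderiv : ∀ x : ℝ, HasDerivAt f ((1 / C) * (1 - 2 * x ^ 2) * Real.exp (-x ^ 2)) x := by
    intro x
    have h1 : HasDerivAt (fun x : ℝ => -x ^ 2) (-(2 * x)) x := by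
      exact (hasDerivAt_pow 2 x).neg.congr_deriv (by norm_num)
    have h2 : HasDerivAt (fun x : ℝ => Real.exp (-x ^ 2)) (Real.exp (-x ^ 2) * (-(2 * x))) x :=
      (Real.hasDerivAt_exp _).comp x h1
    have h3 : HasDerivAt (fun x : ℝ => (1 / C) * x)  (1 / C) x := by
      simpa using (hasDerivAt_id x).const_mul (1 / C)
    have h4 := h3.mul h2
    have : HasDerivAt (fun x : ℝ => (1 / C) * x * Real.exp (-x ^ 2))
        ((1 / C) * (1 - 2 * x ^ 2) * Real.exp (-x ^ 2)) x := by
      refine h4.congr_deriv ?_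
      ring
    have hfeq : f = fun x : ℝ => (1 / C) * x * Real.exp (-x ^ 2) := funext hf
    rw [hfeq]
    exact this
  have hdV : deriv f Vstar = 1 + 2 * Real.log C := by
    rw [(hderiv Vstar).deriv, hexp, hVsq]
    field_simp
    ring
  have hcomp : HasDerivAt (f ∘ f)
      (((1 / C) * (1 - 2 * Vstar ^ 2) * Real.exp (-Vstar ^ 2)) *
       ((1 / C) * (1 - 2 * Vstar ^ 2) * Real.exp (-Vstar ^ 2))) Vstar := by
    have := (hderiv (f Vstar)).comp Vstar (hderiv Vstar)
    rwa [hfix] at this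
  have hval : (1 / C) * (1 - 2 * Vstar ^ 2) * Real.exp (-Vstar ^ 2)
      = 1 + 2 * Real.log C := by
    rw [hexp, hVsq]
    field_simp
    ring
  constructor
  · rw [hcomp.deriv, hval]; ring
  · nlinarith [sq_nonneg (1 + 2 * Real.log C + 1)]
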